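/- For every n ≥ 2, the Garside fundamental braid Δ_n = (σ_1 σ_2 ⋯ σ_{n−1})(σ_1 σ_2 ⋯ σ_{n−2}) ⋯ (σ_1 σ_2)(σ_1) can be expressed in terms of the square roots of free generators as Δ_n = (γ_{n−1} γ_{n−2} ⋯ γ_1)(γ_{n−2} ⋯ γ_1) ⋯ (γ_2 γ_1)(γ_1). -/

import Mathlib

/-- The Artin braid relations on the free group with generators `σ_i`, `i ∈ ℕ+`. -/
def braidRels : Set (FreeGroup ℕ+) :=
  {r | ∃ i j : ℕ+,
    ((j : ℕ) = (i : ℕ) + 1 ∧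
      r = FreeGroup.of i * FreeGroup.of j * FreeGroup.of i *
          (FreeGroup.of j * FreeGroup.of i * FreeGroup.of j)⁻¹) ∨
    ((i : ℕ) + 1 < (j : ℕ) ∧
      r = FreeGroup.of i * FreeGroup.of j * (FreeGroup.of j * FreeGroup.of i)⁻¹)}

/-- The braid group `B∞` on infinitely many strands, presented by the Artin generators
`σ_1, σ_2, …` subject to the braid relations. -/
abbrev BraidInf : Type := PresentedGroup braidRels

/-- The Artin generator `σ_n` of `B∞` for `n ≥ 1`, with the paper's convention `σ_0 = 1`. -/
def sig (n : ℕ) : BraidInf :=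
  if h : 0 < n then PresentedGroup.of (⟨n, h⟩ : ℕ+) else 1

/-- Ascending product `f a * f (a+1) * ⋯ * f b` (equal to `1` when `b < a`). -/
def ascProd {G : Type*} [Monoid G] (f : ℕ → G) (a b : ℕ) : G :=
  ((List.range' a (b + 1 - a)).map f).prod

/-- Descending product `f b * f (b-1) * ⋯ * f a` (equal to `1` when `b < a`). -/
def descProd {G : Type*} [Monoid G] (f : ℕ → G) (b a : ℕ) : G :=
  (((List.range' a (b + 1 - a)).map f).reverse).prod

/-- The square roots of free generators
`γ_k = (σ_1 ⋯ σ_{k−1}) σ_k (σ_{k−1}^{−1} ⋯ σ_1^{−1})` of `B∞`. -/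
def γ (k : ℕ) : BraidInf :=
  ascProd sig 1 (k - 1) * sig k * descProd (fun i => (sig i)⁻¹) (k - 1) 1

/-- The subgroup `B_n` of `B∞` generated by `σ_1, …, σ_{n−1}`. -/
def Bsub (n : ℕ) : Subgroup BraidInf :=
  Subgroup.closure {x | ∃ i : ℕ, 1 ≤ i ∧ i < n ∧ x = sig i}

/-- The subgroup `B_{m,∞}` of `B∞` generated by `{σ_k : k ≥ m}`. -/
def BFrom (m : ℕ) : Subgroup BraidInf :=
  Subgroup.closure {x | ∃ i : ℕ, m ≤ i ∧ x = sig i}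

theorem braid_rel1 {i j : ℕ+} (h : (j : ℕ) = (i : ℕ) + 1) :
    (PresentedGroup.of i : BraidInf) * .of j * .of i = .of j * .of i * .of j := by
  have h1 : (FreeGroup.of i * FreeGroup.of j * FreeGroup.of i *
      (FreeGroup.of j * FreeGroup.of i * FreeGroup.of j)⁻¹) ∈ braidRels :=
    ⟨i, j, Or.inl ⟨h, rfl⟩⟩
  have h2 : (PresentedGroup.mk braidRels) (FreeGroup.of i * FreeGroup.of j * FreeGroup.of i *
      (FreeGroup.of j * FreeGroup.of i * FreeGroup.of j)⁻¹) = 1 :=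
    (QuotientGroup.eq_one_iff _).mpr (Subgroup.subset_normalClosure h1)
  simp only [map_mul, map_inv] at h2
  exact mul_inv_eq_one.mp h2

theorem braid_rel2 {i j : ℕ+} (h : (i : ℕ) + 1 < (j : ℕ)) :
    (PresentedGroup.of i : BraidInf) * .of j = .of j * .of i := by
  have h1 : (FreeGroup.of i * FreeGroup.of j * (FreeGroup.of j * FreeGroup.of i)⁻¹) ∈ braidRels :=
    ⟨i, j, Or.inr ⟨h, rfl⟩⟩
  have h2 : (PresentedGroup.mk braidRels) (FreeGroup.of i * FreeGroup.of j *
      (FreeGroup.of j * FreeGroup.of i)⁻¹) = 1 :=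
    (QuotientGroup.eq_one_iff _).mpr (Subgroup.subset_normalClosure h1)
  simp only [map_mul, map_inv] at h2
  exact mul_inv_eq_one.mp h2

theorem shMap_rels : ∀ r ∈ braidRels,
    FreeGroup.lift (fun i : ℕ+ => (PresentedGroup.of (i + 1) : BraidInf)) r = 1 := by
  rintro r ⟨i, j, ⟨h, rfl⟩ | ⟨h, rfl⟩⟩
  · simp only [map_mul, map_inv, FreeGroup.lift_apply_of]
    rw [mul_inv_eq_one]
    exact braid_rel1 (by push_cast; omega)
  · simp only [map_mul, map_inv, FreeGroup.lift_apply_of]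
    rw [mul_inv_eq_one]
    exact braid_rel2 (by push_cast; omega)

/-- The shift endomorphism `sh` of `B∞`, determined by `sh(σ_i) = σ_{i+1}`. -/
def sh : BraidInf →* BraidInf := PresentedGroup.toGroup shMap_rels

/-- The `m`-shift `sh_m(τ) = σ_m σ_{m−1} ⋯ σ_1 ⬝ sh(τ) ⬝ σ_1^{−1} ⋯ σ_{m−1}^{−1} σ_m^{−1}`. -/
def shm (m : ℕ) (τ : BraidInf) : BraidInf :=
  descProd sig m 1 * sh τ * ascProd (fun i => (sig i)⁻¹) 1 m

/-- The Garside fundamental braid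
`Δ_n = (σ_1 σ_2 ⋯ σ_{n−1})(σ_1 σ_2 ⋯ σ_{n−2}) ⋯ (σ_1 σ_2)(σ_1)`. -/
def Delta (n : ℕ) : BraidInf := descProd (fun j => ascProd sig 1 j) (n - 1) 1

/- Each `γ_k` is `σ_k` conjugated by `σ_1 ⋯ σ_{k−1}`, so `γ_k (σ_1 ⋯ σ_{k−1}) = σ_1 ⋯ σ_k`
and the products of `γ`'s telescope: `γ_j ⋯ γ_1 = σ_1 ⋯ σ_j`. Substituting this into each
factor of `Δ_n` gives the theorem; no braid relation is needed. -/

section Products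

variable {G : Type*}

lemma ascProd_succ [Monoid G] (f : ℕ → G) {a b : ℕ} (h : a ≤ b + 1) :
    ascProd f a (b + 1) = ascProd f a b * f (b + 1) := by
  rw [ascProd, ascProd, show b + 1 + 1 - a = b + 1 - a + 1 by omega, List.range'_concat,
    List.map_append, List.prod_append, show a + 1 * (b + 1 - a) = b + 1 by omega]
  simp

lemma descProd_succ [Monoid G] (f : ℕ → G) {a b : ℕ} (h : a ≤ b + 1) :
    descProd f (b + 1) a = f (b + 1) * descProd f b a := by
  rw [descProd, descProd, show b + 1 + 1 - a = b + 1 - a + 1 by omega, List.range'_concat,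
    List.map_append, List.reverse_append, List.prod_append,
    show a + 1 * (b + 1 - a) = b + 1 by omega]
  simp

lemma descProd_inv [Group G] (f : ℕ → G) (b a : ℕ) :
    descProd (fun i => (f i)⁻¹) b a = (ascProd f a b)⁻¹ := by
  rw [descProd, ascProd, List.prod_inv_reverse, List.map_map]
  rfl

end Products

lemma γ_succ_mul_ascProd_sig (j : ℕ) : γ (j + 1) * ascProd sig 1 j = ascProd sig 1 (j + 1) := by
  rw [γ, Nat.add_sub_cancel, descProd_inv, inv_mul_cancel_right, ascProd_succ _ (by omega)]

lemma descProd_γ_eq_ascProd_sig (j : ℕ) : descProd γ j 1 = ascProd sig 1 j := by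
  induction j with
  | zero => rfl
  | succ j ih => rw [descProd_succ _ (by omega), ih, γ_succ_mul_ascProd_sig]

theorem Delta_eq_gamma_prod_general (n : ℕ) :
    Delta n = descProd (fun j => descProd γ j 1) (n - 1) 1 := by
  simp only [Delta, descProd_γ_eq_ascProd_sig]

/-- For `n ≥ 2`, `Δ_n = (γ_{n−1} γ_{n−2} ⋯ γ_1)(γ_{n−2} ⋯ γ_1) ⋯ (γ_2 γ_1)(γ_1)`. -/
theorem Delta_eq_gamma_prod (n : ℕ) (hn : 2 ≤ n) :
    Delta n = descProd (fun j => descProd γ j 1) (n - 1) 1 :=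
  Delta_eq_gamma_prod_general n
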